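/- arXiv:1803.09259 — 3 statements merged into one kernel-verified Lean document; each statement's English description precedes it below -/
import Mathlib

section
/- Let h : ℂ → ℂ be an entire function satisfying condition (H). Then for all integers k >= 1 and n >= 1: (i) if k - 2n >= 1 then h^n(G_k) ⊆ D(4(k-2n)+2, 1/2); (ii) if 2n >= k then h^n(G_k) ⊆ D(-(4(n - ⌊k/2⌋ + 1)+2), 1/2); (iii) h^n(B_k) ⊆ D(-(4(k+n)+2), 1/2). In particular, for each k >= 1 the images h^n(G_k), n >= 1, lie in pairwise disjoint disks. -/
open Complex Metric

noncomputable section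

/-- `Gset k` is the set `G_k` for `k ≥ 1`. -/
def Gset (k : ℕ) : Set ℂ :=
  {z | ‖z - (4*(k:ℂ)+2)‖ ≤ 1} ∪
  {z | z.re = 4*(k:ℝ)+2 ∧ 1 ≤ z.im} ∪
  {z | z.re = 4*(k:ℝ)+2 ∧ z.im ≤ -1}

/-- `Bset k` is the set `B_k` for `k ≥ 1`. -/
def Bset (k : ℕ) : Set ℂ :=
  {z | ‖z + (4*(k:ℂ)+2)‖ ≤ 1} ∪
  {z | z.re = -(4*(k:ℝ)+2) ∧ 1 ≤ z.im} ∪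
  {z | z.re = -(4*(k:ℝ)+2) ∧ z.im ≤ -1}

/-- `Lset k` is the vertical line `Re z = 4k`. -/
def Lset (k : ℕ) : Set ℂ := {z | z.re = 4*(k:ℝ)}

/-- `Mset k` is the vertical line `Re z = -4k`. -/
def Mset (k : ℕ) : Set ℂ := {z | z.re = -(4*(k:ℝ))}

/-- `G0` is the closed disk `|z - 2| ≤ 1`. -/
def G0 : Set ℂ := {z | ‖z - 2‖ ≤ 1}

/-- `E0 = G_0 ∪ ⋃_{k ≥ 1} (L_k ∪ M_k)`. -/
def E0 : Set ℂ := G0 ∪ ⋃ k ∈ Set.Ici 1, (Lset k ∪ Mset k)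

/-- Condition (F). -/
def CondF (f : ℂ → ℂ) : Prop :=
  (∀ z ∈ E0, ‖f z - 2‖ < 1/2) ∧
  (∀ k : ℕ, 1 ≤ k → ∀ z ∈ Gset k, ‖f z + 6‖ < 1/2) ∧
  (∀ k : ℕ, 1 ≤ k → ∀ z ∈ Bset k, ‖f z + (4*(k:ℂ)+6)‖ < 1/2)

/-- Condition (G). -/
def CondG (g : ℂ → ℂ) : Prop :=
  (∀ z ∈ E0, ‖g z - 2‖ < 1/2) ∧
  (∀ z ∈ Gset 1, ‖g z + 6‖ < 1/2) ∧
  (∀ k : ℕ, 2 ≤ k → ∀ z ∈ Gset k, ‖g z - (4*(k:ℂ)-2)‖ < 1/2) ∧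
  (∀ k : ℕ, 1 ≤ k → ∀ z ∈ Bset k, ‖g z + (4*(k:ℂ)+6)‖ < 1/2)

/-- Condition (H). -/
def CondH (h : ℂ → ℂ) : Prop :=
  (∀ z ∈ E0, ‖h z - 2‖ < 1/2) ∧
  (∀ z ∈ Gset 1, ‖h z + 10‖ < 1/2) ∧
  (∀ z ∈ Gset 2, ‖h z + 6‖ < 1/2) ∧
  (∀ k : ℕ, 3 ≤ k → ∀ z ∈ Gset k, ‖h z - (4*(k:ℂ)-6)‖ < 1/2) ∧
  (∀ k : ℕ, 1 ≤ k → ∀ z ∈ Bset k, ‖h z + (4*(k:ℂ)+6)‖ < 1/2)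


section AuxWander

variable {h : ℂ → ℂ}

/-- The ball of radius 1/2 around `4m+2` lies in `Gset m`. -/
lemma ballG_subset (m : ℕ) : ball (4*(m:ℂ)+2) (1/2) ⊆ Gset m := by
  intro z hz
  rw [mem_ball, Complex.dist_eq] at hz
  simp only [Gset, Set.mem_union, Set.mem_setOf_eq]
  left; left; linarith

/-- The ball of radius 1/2 around `-(4m+2)` lies in `Bset m`. -/
lemma ballB_subset (m : ℕ) : ball (-(4*(m:ℂ)+2)) (1/2) ⊆ Bset m := by
  intro z hz
  rw [mem_ball, Complex.dist_eq, sub_neg_eq_add] at hz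
  simp only [Bset, Set.mem_union, Set.mem_setOf_eq]
  left; left; linarith

lemma step_G1 (hH : CondH h) : h '' Gset 1 ⊆ ball (-10 : ℂ) (1/2) := by
  rintro _ ⟨z, hz, rfl⟩
  have := hH.2.1 z hz
  rw [mem_ball, Complex.dist_eq, sub_neg_eq_add]
  exact this

lemma step_G2 (hH : CondH h) : h '' Gset 2 ⊆ ball (-6 : ℂ) (1/2) := by
  rintro _ ⟨z, hz, rfl⟩
  have := hH.2.2.1 z hz
  rw [mem_ball, Complex.dist_eq, sub_neg_eq_add]
  exact this

lemma step_Gk (hH : CondH h) (k : ℕ) (hk : 3 ≤ k) :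
    h '' Gset k ⊆ ball (4*(k:ℂ)-6) (1/2) := by
  rintro _ ⟨z, hz, rfl⟩
  have := hH.2.2.2.1 k hk z hz
  rw [mem_ball, Complex.dist_eq]
  exact this

lemma step_Bk (hH : CondH h) (k : ℕ) (hk : 1 ≤ k) :
    h '' Bset k ⊆ ball (-(4*(k:ℂ)+6)) (1/2) := by
  rintro _ ⟨z, hz, rfl⟩
  have := hH.2.2.2.2 k hk z hz
  rw [mem_ball, Complex.dist_eq, sub_neg_eq_add]
  exact this

/-- Iterating `h` on a ball around `-(4m+2)` shifts it `n` steps leftwards. -/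
lemma chainB (hH : CondH h) : ∀ n m : ℕ, 1 ≤ m →
    h^[n] '' ball (-(4*(m:ℂ)+2)) (1/2) ⊆ ball (-(4*((m+n:ℕ):ℂ)+2)) (1/2) := by
  intro n
  induction n with
  | zero => intro m hm; simp
  | succ n ih =>
      intro m hm
      rw [Function.iterate_succ, Set.image_comp]
      have s1 : h '' ball (-(4*(m:ℂ)+2)) (1/2) ⊆ ball (-(4*((m+1:ℕ):ℂ)+2)) (1/2) := by
        have e : (-(4*((m+1:ℕ):ℂ)+2)) = -(4*(m:ℂ)+6) := by push_cast; ring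
        rw [e]
        exact (Set.image_mono (ballB_subset m)).trans (step_Bk hH m hm)
      refine (Set.image_mono s1).trans ?_
      refine (ih (m+1) (by omega)).trans ?_
      rw [show ((m+1+n:ℕ):ℂ) = ((m+(n+1):ℕ):ℂ) by push_cast; ring]

/-- Part (iii): iterates of `Bset k`. -/
lemma iterBset (hH : CondH h) (n k : ℕ) (hn : 1 ≤ n) (hk : 1 ≤ k) :
    h^[n] '' Bset k ⊆ ball (-(4*((k:ℂ)+(n:ℂ))+2)) (1/2) := by
  obtain ⟨n', rfl⟩ : ∃ n', n = n' + 1 := ⟨n - 1, by omega⟩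
  rw [Function.iterate_succ, Set.image_comp]
  have s1 : h '' Bset k ⊆ ball (-(4*((k+1:ℕ):ℂ)+2)) (1/2) := by
    have e : (-(4*((k+1:ℕ):ℂ)+2)) = -(4*(k:ℂ)+6) := by push_cast; ring
    rw [e]; exact step_Bk hH k hk
  refine (Set.image_mono s1).trans ?_
  refine (chainB hH n' (k+1) (by omega)).trans ?_
  rw [show ((k+1+n':ℕ):ℂ) = (k:ℂ)+((n'+1:ℕ):ℂ) by push_cast; ring]

/-- Part (i): iterates of `Gset k` while staying on the right. -/
lemma iterGpos (hH : CondH h) : ∀ n k : ℕ, 1 ≤ n → 2*n+1 ≤ k →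
    h^[n] '' Gset k ⊆ ball (4*((k:ℂ)-2*(n:ℂ))+2) (1/2) := by
  intro n
  induction n with
  | zero => omega
  | succ n ih =>
      intro k _ hk
      rcases Nat.eq_zero_or_pos n with rfl | hn
      · have e : (4*((k:ℂ)-2*((1:ℕ):ℂ))+2) = 4*(k:ℂ)-6 := by push_cast; ring
        rw [Function.iterate_one, e]
        exact step_Gk hH k (by omega)
      · rw [Function.iterate_succ, Set.image_comp]
        have s1 : h '' Gset k ⊆ Gset (k-2) := by
          have e : (4*((k-2:ℕ):ℂ)+2) = 4*(k:ℂ)-6 := by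
            have : ((k-2:ℕ):ℂ) = (k:ℂ)-2 := by
              push_cast [Nat.cast_sub (by omega : 2 ≤ k)]; ring
            rw [this]; ring
          refine (step_Gk hH k (by omega)).trans ?_
          rw [← e]; exact ballG_subset (k-2)
        refine (Set.image_mono s1).trans ?_
        refine (ih (k-2) hn (by omega)).trans ?_
        have : ((k-2:ℕ):ℂ) = (k:ℂ)-2 := by
          push_cast [Nat.cast_sub (by omega : 2 ≤ k)]; ring
        rw [this, show (4*(((k:ℂ)-2)-2*(n:ℂ))+2) = 4*((k:ℂ)-2*((n+1:ℕ):ℂ))+2 by push_cast; ring]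

/-- Part (ii): iterates of `Gset k` after crossing to the left. -/
lemma iterGneg (hH : CondH h) : ∀ k : ℕ, 1 ≤ k → ∀ n : ℕ, 1 ≤ n → k ≤ 2*n →
    h^[n] '' Gset k ⊆ ball (-(4*((n:ℂ)-((k/2 : ℕ):ℂ)+1)+2)) (1/2) := by
  intro k
  induction k using Nat.strong_induction_on with
  | _ k ih =>
    intro hk n hn hkn
    obtain ⟨n', rfl⟩ : ∃ n', n = n' + 1 := ⟨n - 1, by omega⟩
    match k, hk with
    | 1, _ =>
        rw [Function.iterate_succ, Set.image_comp]
        have s1 : h '' Gset 1 ⊆ ball (-(4*((2:ℕ):ℂ)+2)) (1/2) := by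
          have e : (-(4*((2:ℕ):ℂ)+2)) = (-10:ℂ) := by push_cast; ring
          rw [e]; exact step_G1 hH
        refine (Set.image_mono s1).trans ?_
        refine (chainB hH n' 2 (by omega)).trans ?_
        rw [show (-(4*((2+n':ℕ):ℂ)+2)) = -(4*(((n'+1:ℕ):ℂ)-(((1:ℕ)/2:ℕ):ℂ)+1)+2) by
          rw [show ((1:ℕ)/2 : ℕ) = 0 from rfl]; push_cast; ring]
    | 2, _ =>
        rw [Function.iterate_succ, Set.image_comp]
        have s1 : h '' Gset 2 ⊆ ball (-(4*((1:ℕ):ℂ)+2)) (1/2) := by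
          have e : (-(4*((1:ℕ):ℂ)+2)) = (-6:ℂ) := by push_cast; ring
          rw [e]; exact step_G2 hH
        refine (Set.image_mono s1).trans ?_
        refine (chainB hH n' 1 (by omega)).trans ?_
        rw [show (-(4*((1+n':ℕ):ℂ)+2)) = -(4*(((n'+1:ℕ):ℂ)-(((2:ℕ)/2:ℕ):ℂ)+1)+2) by
          rw [show ((2:ℕ)/2 : ℕ) = 1 from rfl]; push_cast; ring]
    | (m+3), _ =>
        set k := m + 3 with hkdef
        have hn' : 1 ≤ n' := by omega
        rw [Function.iterate_succ, Set.image_comp]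
        have s1 : h '' Gset k ⊆ Gset (k-2) := by
          have e : (4*((k-2:ℕ):ℂ)+2) = 4*(k:ℂ)-6 := by
            have : ((k-2:ℕ):ℂ) = (k:ℂ)-2 := by
              push_cast [Nat.cast_sub (by omega : 2 ≤ k)]; ring
            rw [this]; ring
          refine (step_Gk hH k (by omega)).trans ?_
          rw [← e]; exact ballG_subset (k-2)
        refine (Set.image_mono s1).trans ?_
        refine (ih (k-2) (by omega) (by omega) n' hn' (by omega)).trans ?_
        have e1 : ((n':ℕ):ℂ) = ((n'+1:ℕ):ℂ) - 1 := by push_cast; ring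
        have e2 : (((k-2)/2:ℕ):ℂ) = ((k/2:ℕ):ℂ) - 1 := by
          have h1 : (k-2)/2 = k/2 - 1 := by omega
          have h2 : 1 ≤ k/2 := by omega
          rw [h1, Nat.cast_sub h2]; norm_num
        rw [e1, e2, show (-(4*(((n'+1:ℕ):ℂ)-1-(((k/2:ℕ):ℂ)-1)+1)+2))
          = -(4*(((n'+1:ℕ):ℂ)-((k/2:ℕ):ℂ)+1)+2) by ring]

/-- The real center of the `n`-th disk containing `h^[n] '' Gset k`. -/
def cRw (k j : ℕ) : ℝ :=
  if 2*j+1 ≤ k then 4*((k:ℝ)-2*(j:ℝ))+2 else -(4*((j:ℝ)-((k/2:ℕ):ℝ)+1)+2)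

lemma cRw_gap (k m n : ℕ) (hmn : m ≠ n) : 1 ≤ |cRw k m - cRw k n| := by
  have habs : ∀ a b : ℕ, a < b → (1:ℝ) ≤ (b:ℝ) - (a:ℝ) := by
    intro a b hab
    have : (a:ℝ) + 1 ≤ (b:ℝ) := by exact_mod_cast hab
    linarith
  unfold cRw
  rw [le_abs]
  split_ifs with h1 h2 h2
  · rcases lt_or_gt_of_ne hmn with H | H
    · left; have := habs m n H; linarith
    · right; have := habs n m H; linarith
  · -- m positive branch, n negative branch: k ≤ 2n so k/2 ≤ n
    left
    have hkm : (2*(m:ℝ)+1) ≤ (k:ℝ) := by exact_mod_cast h1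
    have hkn : ((k/2:ℕ):ℝ) ≤ (n:ℝ) := by exact_mod_cast (by omega : k/2 ≤ n)
    linarith
  · right
    have hkn : (2*(n:ℝ)+1) ≤ (k:ℝ) := by exact_mod_cast h2
    have hkm : ((k/2:ℕ):ℝ) ≤ (m:ℝ) := by exact_mod_cast (by omega : k/2 ≤ m)
    linarith
  · rcases lt_or_gt_of_ne hmn with H | H
    · left; have := habs m n H; linarith
    · right; have := habs n m H; linarith

end AuxWander

theorem iterates_of_condH_wander (h : ℂ → ℂ) (hh : Differentiable ℂ h)
    (hH : CondH h) :
    (∀ k n : ℕ, 1 ≤ k → 1 ≤ n →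
      (2*n + 1 ≤ k → h^[n] '' Gset k ⊆ ball (4*((k:ℂ)-2*(n:ℂ))+2) (1/2)) ∧
      (k ≤ 2*n → h^[n] '' Gset k ⊆
        ball (-(4*((n:ℂ)-((k/2 : ℕ):ℂ)+1)+2)) (1/2)) ∧
      h^[n] '' Bset k ⊆ ball (-(4*((k:ℂ)+(n:ℂ))+2)) (1/2)) ∧

    (∀ k : ℕ, 1 ≤ k →
      ∃ D : ℕ → Set ℂ,
        (∀ n : ℕ, 1 ≤ n → ∃ a : ℂ, ∃ r : ℝ, 0 < r ∧ D n = ball a r) ∧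
        (∀ m n : ℕ, 1 ≤ m → 1 ≤ n → m ≠ n → Disjoint (D m) (D n)) ∧
        (∀ n : ℕ, 1 ≤ n → h^[n] '' Gset k ⊆ D n)) := by
  constructor
  · intro k n hk hn
    exact ⟨fun hkn => iterGpos hH n k hn hkn,
           fun hkn => iterGneg hH k hk n hn hkn,
           iterBset hH n k hn hk⟩
  · intro k hk
    refine ⟨fun n => ball ((cRw k n : ℝ) : ℂ) (1/2), ?_, ?_, ?_⟩
    · intro n _; exact ⟨_, 1/2, by norm_num, rfl⟩
    · intro m n _ _ hmn
      refine Metric.ball_disjoint_ball ?_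
      have e : dist (((cRw k m : ℝ)):ℂ) (((cRw k n : ℝ)):ℂ) = |cRw k m - cRw k n| := by
        rw [Complex.dist_eq, ← Complex.ofReal_sub, Complex.norm_real, Real.norm_eq_abs]
      rw [e]
      have := cRw_gap k m n hmn
      linarith
    · intro n hn
      show h^[n] '' Gset k ⊆ ball ((cRw k n : ℝ) : ℂ) (1/2)
      rcases le_or_gt (2*n+1) k with hkn | hkn
      · have e : ((cRw k n : ℝ) : ℂ) = 4*((k:ℂ)-2*(n:ℂ))+2 := by
          rw [cRw, if_pos hkn]; push_cast; ring
        rw [e]; exact iterGpos hH n k hn hkn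
      · have e : ((cRw k n : ℝ) : ℂ) = -(4*((n:ℂ)-((k/2 : ℕ):ℂ)+1)+2) := by
          rw [cRw, if_neg (by omega)]; push_cast; ring
        rw [e]; exact iterGneg hH k hk n hn (by omega)
end
end

section
/- Let f, g, h be entire functions satisfying conditions (F), (G), (H) respectively. Then the composite g∘f∘h satisfies: |(g∘f∘h)(z) - 2| < 1/2 for all z ∈ E_0; |(g∘f∘h)(z) + 18| < 1/2 for all z ∈ G_1; |(g∘f∘h)(z) + 14| < 1/2 for all z ∈ G_2; |(g∘f∘h)(z) + 10| < 1/2 for all z ∈ G_k for every k >= 3; and |(g∘f∘h)(z) + (4k+14)| < 1/2 for all z ∈ B_k for every k >= 1. -/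
open Complex Metric

noncomputable section

lemma mem_Bset_of_close (k : ℕ) (w : ℂ) (hw : ‖w + (4*(k:ℂ)+2)‖ ≤ 1) :
    w ∈ Bset k := Or.inl (Or.inl hw)

lemma mem_Gset_of_close (k : ℕ) (w : ℂ) (hw : ‖w - (4*(k:ℂ)+2)‖ ≤ 1) :
    w ∈ Gset k := Or.inl (Or.inl hw)

lemma mem_E0_of_close (w : ℂ) (hw : ‖w - 2‖ ≤ 1) : w ∈ E0 := Or.inl hw

theorem comp_gfh (f g h : ℂ → ℂ)
    (hf : Differentiable ℂ f) (hg : Differentiable ℂ g) (hh : Differentiable ℂ h)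
    (hF : CondF f) (hG : CondG g) (hH : CondH h) :
    (∀ z ∈ E0, ‖(g ∘ f ∘ h) z - 2‖ < 1/2) ∧
    (∀ z ∈ Gset 1, ‖(g ∘ f ∘ h) z + 18‖ < 1/2) ∧
    (∀ z ∈ Gset 2, ‖(g ∘ f ∘ h) z + 14‖ < 1/2) ∧
    (∀ k : ℕ, 3 ≤ k → ∀ z ∈ Gset k, ‖(g ∘ f ∘ h) z + 10‖ < 1/2) ∧
    (∀ k : ℕ, 1 ≤ k → ∀ z ∈ Bset k, ‖(g ∘ f ∘ h) z + (4*(k:ℂ)+14)‖ < 1/2) := by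
  obtain ⟨hF0, hFG, hFB⟩ := hF
  obtain ⟨hG0, hG1, hGk, hGB⟩ := hG
  obtain ⟨hH0, hH1, hH2, hHk, hHB⟩ := hH
  refine ⟨?_, ?_, ?_, ?_, ?_⟩
  · intro z hz
    have h1 := hH0 z hz
    have mh : h z ∈ E0 := mem_E0_of_close _ (by linarith)
    have h2 := hF0 _ mh
    have mf : f (h z) ∈ E0 := mem_E0_of_close _ (by linarith)
    exact hG0 _ mf
  · intro z hz
    have h1 := hH1 z hz
    have mh : h z ∈ Bset 2 := mem_Bset_of_close 2 _ (by
      have : (4*((2:ℕ):ℂ)+2) = 10 := by norm_num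
      rw [this]; linarith)
    have h2 := hFB 2 (by norm_num) _ mh
    have h2' : ‖f (h z) + 14‖ < 1/2 := by
      have : (4*((2:ℕ):ℂ)+6) = 14 := by norm_num
      rwa [this] at h2
    have mf : f (h z) ∈ Bset 3 := mem_Bset_of_close 3 _ (by
      have : (4*((3:ℕ):ℂ)+2) = 14 := by norm_num
      rw [this]; linarith)
    have h3 := hGB 3 (by norm_num) _ mf
    have : (4*((3:ℕ):ℂ)+6) = 18 := by norm_num
    rwa [this] at h3
  · intro z hz
    have h1 := hH2 z hz
    have mh : h z ∈ Bset 1 := mem_Bset_of_close 1 _ (by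
      have : (4*((1:ℕ):ℂ)+2) = 6 := by norm_num
      rw [this]; linarith)
    have h2 := hFB 1 (by norm_num) _ mh
    have h2' : ‖f (h z) + 10‖ < 1/2 := by
      have : (4*((1:ℕ):ℂ)+6) = 10 := by norm_num
      rwa [this] at h2
    have mf : f (h z) ∈ Bset 2 := mem_Bset_of_close 2 _ (by
      have : (4*((2:ℕ):ℂ)+2) = 10 := by norm_num
      rw [this]; linarith)
    have h3 := hGB 2 (by norm_num) _ mf
    have : (4*((2:ℕ):ℂ)+6) = 14 := by norm_num
    rwa [this] at h3
  · intro k hk z hz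
    have h1 := hHk k hk z hz
    have mh : h z ∈ Gset (k-2) := mem_Gset_of_close (k-2) _ (by
      have hc : (((k-2:ℕ)):ℂ) = (k:ℂ) - 2 := by
        push_cast [Nat.cast_sub (by omega : 2 ≤ k)]; ring
      have : (4*(((k-2:ℕ)):ℂ)+2) = 4*(k:ℂ)-6 := by rw [hc]; ring
      rw [this]; linarith)
    have h2 := hFG (k-2) (by omega) _ mh
    have mf : f (h z) ∈ Bset 1 := mem_Bset_of_close 1 _ (by
      have : (4*((1:ℕ):ℂ)+2) = 6 := by norm_num
      rw [this]; linarith)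
    have h3 := hGB 1 (by norm_num) _ mf
    have : (4*((1:ℕ):ℂ)+6) = 10 := by norm_num
    rwa [this] at h3
  · intro k hk z hz
    have h1 := hHB k hk z hz
    have mh : h z ∈ Bset (k+1) := mem_Bset_of_close (k+1) _ (by
      have : (4*(((k+1:ℕ)):ℂ)+2) = 4*(k:ℂ)+6 := by push_cast; ring
      rw [this]; linarith)
    have h2 := hFB (k+1) (by omega) _ mh
    have h2' : ‖f (h z) + (4*(k:ℂ)+10)‖ < 1/2 := by
      have : (4*(((k+1:ℕ)):ℂ)+6) = 4*(k:ℂ)+10 := by push_cast; ring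
      rwa [this] at h2
    have mf : f (h z) ∈ Bset (k+2) := mem_Bset_of_close (k+2) _ (by
      have : (4*(((k+2:ℕ)):ℂ)+2) = 4*(k:ℂ)+10 := by push_cast; ring
      rw [this]; linarith)
    have h3 := hGB (k+2) (by omega) _ mf
    have : (4*(((k+2:ℕ)):ℂ)+6) = 4*(k:ℂ)+14 := by push_cast; ring
    rwa [this] at h3
end
end

section
/- Let f, g, h be entire functions satisfying conditions (F), (G), (H) respectively. Then the composite h∘f∘g satisfies: |(h∘f∘g)(z) - 2| < 1/2 for all z ∈ E_0; |(h∘f∘g)(z) + 14| < 1/2 for all z ∈ G_1; |(h∘f∘g)(z) + 10| < 1/2 for all z ∈ G_k for every k >= 2; and |(h∘f∘g)(z) + (4k+14)| < 1/2 for all z ∈ B_k for every k >= 1. -/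
open Complex Metric

noncomputable section

lemma mem_E0_of (w : ℂ) (hw : ‖w - 2‖ < 1/2) : w ∈ E0 :=
  Or.inl (by simp only [G0, Set.mem_setOf_eq]; linarith)

lemma mem_Bset_of (m : ℕ) (w : ℂ) (hw : ‖w + (4*(m:ℂ)+2)‖ < 1/2) :
    w ∈ Bset m :=
  Or.inl (Or.inl (by simp only [Set.mem_setOf_eq]; linarith))

lemma mem_Gset_of (m : ℕ) (w : ℂ) (hw : ‖w - (4*(m:ℂ)+2)‖ < 1/2) :
    w ∈ Gset m :=
  Or.inl (Or.inl (by simp only [Set.mem_setOf_eq]; linarith))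

theorem comp_hfg (f g h : ℂ → ℂ)
    (hf : Differentiable ℂ f) (hg : Differentiable ℂ g) (hh : Differentiable ℂ h)
    (hF : CondF f) (hG : CondG g) (hH : CondH h) :
    (∀ z ∈ E0, ‖(h ∘ f ∘ g) z - 2‖ < 1/2) ∧
    (∀ z ∈ Gset 1, ‖(h ∘ f ∘ g) z + 14‖ < 1/2) ∧
    (∀ k : ℕ, 2 ≤ k → ∀ z ∈ Gset k, ‖(h ∘ f ∘ g) z + 10‖ < 1/2) ∧
    (∀ k : ℕ, 1 ≤ k → ∀ z ∈ Bset k, ‖(h ∘ f ∘ g) z + (4*(k:ℂ)+14)‖ < 1/2) := by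
  obtain ⟨hF0, hFG, hFB⟩ := hF
  obtain ⟨hG0, hG1, hGk, hGB⟩ := hG
  obtain ⟨hH0, hH1, hH2, hHk, hHB⟩ := hH
  refine ⟨?_, ?_, ?_, ?_⟩
  · intro z hz
    exact hH0 _ (mem_E0_of _ (by
      have := hF0 _ (mem_E0_of _ (hG0 z hz)); exact this))
  · intro z hz
    -- g z ∈ B_1, f(g z) near -10 ∈ B_2, h near -14
    have h1 : g z ∈ Bset 1 := mem_Bset_of 1 _ (by
      have := hG1 z hz; push_cast; convert this using 2; push_cast; ring)
    have h2 : f (g z) ∈ Bset 2 := mem_Bset_of 2 _ (by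
      have := hFB 1 le_rfl _ h1; push_cast; convert this using 2; push_cast; ring)
    have h3 := hHB 2 (by norm_num) _ h2
    simpa using (by push_cast at h3 ⊢; convert h3 using 2; ring :
      ‖h (f (g z)) + 14‖ < 1/2)
  · intro k hk z hz
    have h1 : g z ∈ Gset (k-1) := mem_Gset_of (k-1) _ (by
      have := hGk k hk z hz
      have hkc : (4:ℂ)*((k-1:ℕ):ℂ)+2 = 4*(k:ℂ)-2 := by
        have : ((k-1:ℕ):ℂ) = (k:ℂ) - 1 := by
          push_cast [Nat.cast_sub (le_trans one_le_two hk)]; ring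
        rw [this]; ring
      rw [hkc]; exact this)
    have h2 : f (g z) ∈ Bset 1 := mem_Bset_of 1 _ (by
      have := hFG (k-1) (by omega) _ h1; push_cast; convert this using 2; push_cast; ring)
    have h3 := hHB 1 le_rfl _ h2
    simpa using (by push_cast at h3 ⊢; convert h3 using 2; ring :
      ‖h (f (g z)) + 10‖ < 1/2)
  · intro k hk z hz
    have h1 : g z ∈ Bset (k+1) := mem_Bset_of (k+1) _ (by
      have := hGB k hk z hz; push_cast; convert this using 2; push_cast; ring)
    have h2 : f (g z) ∈ Bset (k+2) := mem_Bset_of (k+2) _ (by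
      have := hFB (k+1) (by omega) _ h1; push_cast; convert this using 2; push_cast; ring)
    have h3 := hHB (k+2) (by omega) _ h2
    simpa using (by push_cast at h3 ⊢; convert h3 using 2; ring :
      ‖h (f (g z)) + (4*(k:ℂ)+14)‖ < 1/2)
end
end
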